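/- For every bounded linear operator A on a complex Hilbert space, (1/4)‖A*A + AA*‖ + (1/4)c²(Re(A) + Im(A)) + (1/4)c²(Re(A) − Im(A)) ≤ w²(A). -/

import Mathlib

open scoped InnerProductSpace
open ContinuousLinearMap

/-- The numerical radius of a bounded linear operator. -/
noncomputable def numRadius {H : Type*} [NormedAddCommGroup H] [InnerProductSpace ℂ H]
    (A : H →L[ℂ] H) : ℝ :=
  sSup {r : ℝ | ∃ x : H, ‖x‖ = 1 ∧ r = ‖⟪A x, x⟫_ℂ‖}

/-- The Crawford number of a bounded linear operator. -/
noncomputable def crawford {H : Type*} [NormedAddCommGroup H] [InnerProductSpace ℂ H]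
    (A : H →L[ℂ] H) : ℝ :=
  sInf {r : ℝ | ∃ x : H, ‖x‖ = 1 ∧ r = ‖⟪A x, x⟫_ℂ‖}

/-- The real part of a bounded linear operator. -/
noncomputable def reP {H : Type*} [NormedAddCommGroup H] [InnerProductSpace ℂ H]
    [CompleteSpace H] (A : H →L[ℂ] H) : H →L[ℂ] H :=
  ((2 : ℂ)⁻¹) • (A + adjoint A)

/-- The imaginary part of a bounded linear operator. -/
noncomputable def imP {H : Type*} [NormedAddCommGroup H] [InnerProductSpace ℂ H]
    [CompleteSpace H] (A : H →L[ℂ] H) : H →L[ℂ] H :=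
  ((2 * Complex.I)⁻¹) • (A - adjoint A)

/-!
Write `B = Re A + Im A` and `C = Re A - Im A`; both are self-adjoint, `A*A + AA* = B² + C²`, and
for every vector `x` the quadratic forms satisfy `|⟨Bx, x⟩|² + |⟨Cx, x⟩|² = 2|⟨Ax, x⟩|²`
(they are `Re⟨Ax, x⟩ ± Im⟨Ax, x⟩`). Bounding `|⟨Cx, x⟩|` below by `c(C)` gives
`w(B)² ≤ 2w(A)² - c(C)²`, and `‖B‖ = w(B)` since `B` is self-adjoint; symmetrically for `C`.
Adding up, `‖A*A + AA*‖ ≤ ‖B‖² + ‖C‖² ≤ 4w(A)² - c(B)² - c(C)²`.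
-/

open ComplexStarModule ComplexConjugate

section NumericalRange

variable {H : Type*} [NormedAddCommGroup H] [InnerProductSpace ℂ H]

lemma le_numRadius (A : H →L[ℂ] H) {x : H} (hx : ‖x‖ = 1) : ‖⟪A x, x⟫_ℂ‖ ≤ numRadius A := by
  refine le_csSup ⟨‖A‖, ?_⟩ ⟨x, hx, rfl⟩
  rintro _ ⟨y, hy, rfl⟩
  simpa [hy] using (norm_inner_le_norm (A y) y).trans (by simpa [hy] using A.le_opNorm y)

lemma numRadius_nonneg (A : H →L[ℂ] H) : 0 ≤ numRadius A :=
  Real.sSup_nonneg <| by rintro _ ⟨x, -, rfl⟩; exact norm_nonneg _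

lemma numRadius_sq_le {A : H →L[ℂ] H} {M : ℝ} (hM : 0 ≤ M)
    (h : ∀ x : H, ‖x‖ = 1 → ‖⟪A x, x⟫_ℂ‖ ^ 2 ≤ M) : numRadius A ^ 2 ≤ M := by
  have : numRadius A ≤ √M :=
    Real.sSup_le (by rintro _ ⟨x, hx, rfl⟩; exact Real.le_sqrt_of_sq_le (h x hx))
      (Real.sqrt_nonneg M)
  calc numRadius A ^ 2 ≤ √M ^ 2 := by gcongr; exact numRadius_nonneg A
    _ = M := Real.sq_sqrt hM

lemma crawford_nonneg (A : H →L[ℂ] H) : 0 ≤ crawford A :=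
  Real.sInf_nonneg <| by rintro _ ⟨x, -, rfl⟩; exact norm_nonneg _

lemma crawford_le (A : H →L[ℂ] H) {x : H} (hx : ‖x‖ = 1) : crawford A ≤ ‖⟪A x, x⟫_ℂ‖ :=
  csInf_le ⟨0, by rintro _ ⟨y, -, rfl⟩; exact norm_nonneg _⟩ ⟨x, hx, rfl⟩

lemma norm_le_numRadius_of_isSymmetric {A : H →L[ℂ] H} (hA : (A : H →ₗ[ℂ] H).IsSymmetric) :
    ‖A‖ ≤ numRadius A := by
  rw [A.norm_eq_iSup_rayleighQuotient hA]
  refine ciSup_le fun x => ?_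
  rcases eq_or_ne x 0 with rfl | hx
  · simpa using numRadius_nonneg A
  have hc : ((‖x‖⁻¹ : ℝ) : ℂ) ≠ 0 := by simpa using hx
  have hu : ‖((‖x‖⁻¹ : ℝ) : ℂ) • x‖ = 1 := by simp [norm_smul, hx]
  rw [← A.rayleigh_smul x hc, ContinuousLinearMap.rayleighQuotient, A.reApplyInnerSelf_apply, hu,
    one_pow, div_one]
  exact (Complex.abs_re_le_norm _).trans (le_numRadius A hu)

lemma norm_sq_add_crawford_sq_le [Nontrivial H] {B C : H →L[ℂ] H}
    (hB : (B : H →ₗ[ℂ] H).IsSymmetric) {M : ℝ}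
    (h : ∀ x : H, ‖x‖ = 1 → ‖⟪B x, x⟫_ℂ‖ ^ 2 + ‖⟪C x, x⟫_ℂ‖ ^ 2 ≤ M) :
    ‖B‖ ^ 2 + crawford C ^ 2 ≤ M := by
  have hC : ∀ x : H, ‖x‖ = 1 → crawford C ^ 2 ≤ ‖⟪C x, x⟫_ℂ‖ ^ 2 := fun x hx =>
    pow_le_pow_left₀ (crawford_nonneg C) (crawford_le C hx) 2
  obtain ⟨x₀, hx₀⟩ := exists_norm_eq H zero_le_one
  have hM : 0 ≤ M - crawford C ^ 2 := by
    linarith [h x₀ hx₀, hC x₀ hx₀, sq_nonneg ‖⟪B x₀, x₀⟫_ℂ‖]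
  have : ‖B‖ ^ 2 ≤ M - crawford C ^ 2 :=
    calc ‖B‖ ^ 2 ≤ numRadius B ^ 2 := by gcongr; exact norm_le_numRadius_of_isSymmetric hB
      _ ≤ M - crawford C ^ 2 := numRadius_sq_le hM fun x hx => by linarith [h x hx, hC x hx]
  linarith

end NumericalRange

section CartesianDecomposition

variable {H : Type*} [NormedAddCommGroup H] [InnerProductSpace ℂ H] [CompleteSpace H]

lemma reP_eq_realPart (A : H →L[ℂ] H) : reP A = ℜ A := by
  rw [realPart_apply_coe, reP, ← Complex.coe_smul]
  push_cast
  rfl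

lemma imP_eq_imaginaryPart (A : H →L[ℂ] H) : imP A = ℑ A := by
  rw [imaginaryPart_apply_coe, imP, ← Complex.coe_smul, smul_smul]
  congr 1
  push_cast
  field_simp
  simp

lemma isSelfAdjoint_reP (A : H →L[ℂ] H) : IsSelfAdjoint (reP A) :=
  reP_eq_realPart A ▸ (ℜ A).prop

lemma isSelfAdjoint_imP (A : H →L[ℂ] H) : IsSelfAdjoint (imP A) :=
  imP_eq_imaginaryPart A ▸ (ℑ A).prop

lemma adjoint_mul_self_add_mul_adjoint (A : H →L[ℂ] H) :
    adjoint A * A + A * adjoint A =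
      (reP A + imP A) * (reP A + imP A) + (reP A - imP A) * (reP A - imP A) := by
  rw [← ContinuousLinearMap.star_eq_adjoint, star_mul_self_add_self_mul_star, reP_eq_realPart,
    imP_eq_imaginaryPart]
  noncomm_ring

lemma inner_star_apply_self (A : H →L[ℂ] H) (x : H) :
    ⟪star A x, x⟫_ℂ = conj ⟪A x, x⟫_ℂ := by
  rw [ContinuousLinearMap.star_eq_adjoint, ContinuousLinearMap.adjoint_inner_left,
    inner_conj_symm]

lemma inner_reP_apply_self (A : H →L[ℂ] H) (x : H) :
    ⟪reP A x, x⟫_ℂ = (⟪A x, x⟫_ℂ).re := by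
  rw [reP_eq_realPart, realPart_apply_coe, smul_apply,
    add_apply, inner_smul_left_eq_smul, inner_add_left,
    inner_star_apply_self, Complex.add_conj, Complex.real_smul]
  push_cast
  ring

lemma inner_imP_apply_self (A : H →L[ℂ] H) (x : H) :
    ⟪imP A x, x⟫_ℂ = -(⟪A x, x⟫_ℂ).im := by
  rw [imP_eq_imaginaryPart, imaginaryPart_apply_coe, smul_apply,
    smul_apply, sub_apply, inner_smul_left,
    inner_smul_left_eq_smul, inner_sub_left, inner_star_apply_self, Complex.sub_conj,
    Complex.real_smul, map_neg, Complex.conj_I]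
  push_cast
  linear_combination ((⟪A x, x⟫_ℂ).im : ℂ) * Complex.I_sq

lemma norm_inner_reP_add_imP_sq_add_norm_inner_reP_sub_imP_sq (A : H →L[ℂ] H) (x : H) :
    ‖⟪(reP A + imP A) x, x⟫_ℂ‖ ^ 2 + ‖⟪(reP A - imP A) x, x⟫_ℂ‖ ^ 2 = 2 * ‖⟪A x, x⟫_ℂ‖ ^ 2 := by
  rw [add_apply, sub_apply, inner_add_left,
    inner_sub_left, inner_reP_apply_self, inner_imP_apply_self, Complex.sq_norm ⟪A x, x⟫_ℂ,
    Complex.normSq_apply]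
  norm_cast
  simp only [Real.norm_eq_abs, sq_abs]
  ring

end CartesianDecomposition

theorem stmt2 {H : Type*} [NormedAddCommGroup H] [InnerProductSpace ℂ H]
    [CompleteSpace H] [Nontrivial H] (A : H →L[ℂ] H) :
    (1/4 : ℝ) * ‖adjoint A * A + A * adjoint A‖ +
      (1/4 : ℝ) * crawford (reP A + imP A) ^ 2 +
      (1/4 : ℝ) * crawford (reP A - imP A) ^ 2 ≤ numRadius A ^ 2 := by
  set B := reP A + imP A
  set C := reP A - imP A
  have hform : ∀ x : H, ‖x‖ = 1 → ‖⟪B x, x⟫_ℂ‖ ^ 2 + ‖⟪C x, x⟫_ℂ‖ ^ 2 ≤ 2 * numRadius A ^ 2 :=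
    fun x hx => by
      rw [norm_inner_reP_add_imP_sq_add_norm_inner_reP_sub_imP_sq]
      gcongr
      exact le_numRadius A hx
  have hB : ‖B‖ ^ 2 + crawford C ^ 2 ≤ 2 * numRadius A ^ 2 :=
    norm_sq_add_crawford_sq_le ((isSelfAdjoint_reP A).add (isSelfAdjoint_imP A)).isSymmetric hform
  have hC : ‖C‖ ^ 2 + crawford B ^ 2 ≤ 2 * numRadius A ^ 2 :=
    norm_sq_add_crawford_sq_le ((isSelfAdjoint_reP A).sub (isSelfAdjoint_imP A)).isSymmetric
      fun x hx => (add_comm _ _).trans_le (hform x hx)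
  have hAA : ‖adjoint A * A + A * adjoint A‖ ≤ ‖B‖ ^ 2 + ‖C‖ ^ 2 := by
    rw [adjoint_mul_self_add_mul_adjoint, sq, sq]
    exact (norm_add_le _ _).trans (add_le_add (norm_mul_le _ _) (norm_mul_le _ _))
  linarith
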